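/- Let 0 < α < 1/4 and C_{α,N} = (∑_{|n| ≤ N} 2⟨n⟩^{-4α})^{-1/4}. Then for every ε > 0, C_{α,N}⁴ · ∑_{n₁ + n₂ = n, |n₁|,|n₂| ≤ N, min(|n₁|,|n₂|) ≤ N^{1-ε}} 2⟨n₁⟩^{-2α}⟨n₂⟩^{-2α} → 0 as N → ∞, for each fixed n ∈ ℤ. -/

import Mathlib

open Filter

/-- The Japanese bracket `⟨n⟩ = √(1 + n²)`. -/
noncomputable def jbr (n : ℤ) : ℝ := Real.sqrt (1 + (n : ℝ) ^ 2)

/-- The renormalization constant `C_{α,N} = (∑_{|n| ≤ N} 2 ⟨n⟩^{-4α})^{-1/4}`. -/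
noncomputable def renC (α : ℝ) (N : ℕ) : ℝ :=
  (∑ n ∈ Finset.Icc (-(N : ℤ)) (N : ℤ), 2 / jbr n ^ (4 * α)) ^ (-(1 / 4 : ℝ))

/-- The set of pairs `(n₁, n₂)` with `|n₁|, |n₂| ≤ N` and `n₁ + n₂ = n`. -/
noncomputable def pairSet (N : ℕ) (n : ℤ) : Finset (ℤ × ℤ) :=
  ((Finset.Icc (-(N : ℤ)) (N : ℤ)) ×ˢ (Finset.Icc (-(N : ℤ)) (N : ℤ))).filter
    (fun p => p.1 + p.2 = n)

/-!
Write `s = 4α ∈ (0, 1)`. Every term of `∑_{|k| ≤ N} 2⟨k⟩^{-s}` is at least `2(N+1)^{-s}`, so this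
normalising sum is at least `N^{1-s}`. By Peetre's inequality `⟨n₁⟩ ≤ √2 ⟨n⟩ ⟨n₂⟩` when
`n₁ + n₂ = n`, so a pair with `|n₁| ≤ T` contributes at most `C_n ⟨n₁⟩^{-s}`, and symmetrically in
`n₂`. Hence the low-frequency sum is at most a constant times `∑_{|k| ≤ T} ⟨k⟩^{-s} = O(T^{1-s})`,
and with `T = N^{1-ε}` the ratio is `O(N^{-(1-s)} + N^{-ε(1-s)}) → 0`.
-/

open Finset

lemma one_le_jbr (n : ℤ) : 1 ≤ jbr n :=
  Real.one_le_sqrt.mpr (by nlinarith)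

lemma jbr_pos (n : ℤ) : 0 < jbr n :=
  one_pos.trans_le (one_le_jbr n)

lemma jbr_rpow_nonneg (n : ℤ) (t : ℝ) : 0 ≤ jbr n ^ t :=
  Real.rpow_nonneg (jbr_pos n).le t

@[simp] lemma jbr_zero : jbr 0 = 1 := by simp [jbr]

@[simp] lemma jbr_neg (n : ℤ) : jbr (-n) = jbr n := by simp [jbr]

lemma abs_le_jbr (n : ℤ) : |(n : ℝ)| ≤ jbr n :=
  Real.abs_le_sqrt (by linarith)

lemma jbr_le_one_add_abs (n : ℤ) : jbr n ≤ 1 + |(n : ℝ)| :=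
  Real.sqrt_le_iff.mpr ⟨by positivity, by nlinarith [sq_abs (n : ℝ), abs_nonneg (n : ℝ)]⟩

lemma jbr_add_le (a b : ℤ) : jbr (a + b) ≤ √2 * jbr a * jbr b := by
  have hprod : √2 * jbr a * jbr b = √(2 * (1 + (a : ℝ) ^ 2) * (1 + (b : ℝ) ^ 2)) := by
    rw [jbr, jbr, ← Real.sqrt_mul (by norm_num), ← Real.sqrt_mul (by positivity)]
  rw [hprod, jbr]
  push_cast
  exact Real.sqrt_le_sqrt (by nlinarith [sq_nonneg ((a : ℝ) * b - 1), sq_nonneg ((a : ℝ) - b)])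

lemma jbr_rpow_neg_le (a b : ℤ) {t : ℝ} (ht : 0 ≤ t) :
    jbr b ^ (-t) ≤ (√2 * jbr (a + b)) ^ t * jbr a ^ (-t) := by
  set M := √2 * jbr (a + b)
  have hM : 0 < M := mul_pos (by positivity) (jbr_pos _)
  have hab : jbr a / M ≤ jbr b := by
    rw [div_le_iff₀ hM]
    simpa [M, mul_comm, mul_left_comm] using jbr_add_le (a + b) (-b)
  calc jbr b ^ (-t) ≤ (jbr a / M) ^ (-t) :=
        Real.rpow_le_rpow_of_nonpos (div_pos (jbr_pos a) hM) hab (neg_nonpos.mpr ht)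
    _ = M ^ t * jbr a ^ (-t) := by
        rw [Real.div_rpow (jbr_pos a).le hM.le, Real.rpow_neg hM.le, div_inv_eq_mul, mul_comm]

lemma two_mul_jbr_rpow_mul_jbr_rpow_nonneg (t : ℝ) (a b : ℤ) :
    0 ≤ 2 * jbr a ^ t * jbr b ^ t :=
  mul_nonneg (mul_nonneg zero_le_two (jbr_rpow_nonneg a t)) (jbr_rpow_nonneg b t)

lemma two_mul_jbr_rpow_mul_jbr_rpow_le {α : ℝ} (hα : 0 ≤ α) (a b : ℤ) :
    2 * jbr a ^ (-(2 * α)) * jbr b ^ (-(2 * α))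
      ≤ 2 * (√2 * jbr (a + b)) ^ (2 * α) * jbr a ^ (-(4 * α)) := by
  have hsq : jbr a ^ (-(4 * α)) = jbr a ^ (-(2 * α)) * jbr a ^ (-(2 * α)) := by
    rw [← Real.rpow_add (jbr_pos a)]; ring_nf
  calc 2 * jbr a ^ (-(2 * α)) * jbr b ^ (-(2 * α))
      ≤ 2 * jbr a ^ (-(2 * α)) * ((√2 * jbr (a + b)) ^ (2 * α) * jbr a ^ (-(2 * α))) := by
        gcongr
        · exact mul_nonneg zero_le_two (jbr_rpow_nonneg a _)
        · exact jbr_rpow_neg_le a b (by positivity)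
    _ = 2 * (√2 * jbr (a + b)) ^ (2 * α) * jbr a ^ (-(4 * α)) := by rw [hsq]; ring

lemma sum_le_sum_comp_add_sum_comp {ι κ M : Type*} [DecidableEq κ] [AddCommMonoid M]
    [PartialOrder M] [IsOrderedAddMonoid M] {s : Finset κ} {t : Finset ι} {f : κ → M}
    {e₁ e₂ : ι → κ} (hf : ∀ x, 0 ≤ f x) (hs : s ⊆ t.image e₁ ∪ t.image e₂) :
    ∑ x ∈ s, f x ≤ ∑ i ∈ t, f (e₁ i) + ∑ i ∈ t, f (e₂ i) :=
  calc ∑ x ∈ s, f x ≤ ∑ x ∈ t.image e₁ ∪ t.image e₂, f x :=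
        sum_le_sum_of_subset_of_nonneg hs fun x _ _ => hf x
    _ ≤ ∑ x ∈ t.image e₁, f x + ∑ x ∈ t.image e₂, f x := by
        rw [← sum_union_inter]
        exact le_add_of_nonneg_right (sum_nonneg fun x _ => hf x)
    _ ≤ ∑ i ∈ t, f (e₁ i) + ∑ i ∈ t, f (e₂ i) :=
        add_le_add (sum_image_le_of_nonneg fun x _ => hf x)
          (sum_image_le_of_nonneg fun x _ => hf x)

lemma rpow_sub_one_add_mul_rpow_le {x t : ℝ} (hx : 1 ≤ x) (ht₀ : 0 ≤ t) (ht₁ : t ≤ 1) :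
    (x - 1) ^ t + t * x ^ (t - 1) ≤ x ^ t := by
  have hx₀ : 0 < x := one_pos.trans_le hx
  have hinv : x⁻¹ ≤ 1 := inv_le_one_of_one_le₀ hx
  have bernoulli : (1 + -x⁻¹) ^ t ≤ 1 + t * -x⁻¹ :=
    rpow_one_add_le_one_add_mul_self (by linarith) ht₀ ht₁
  rw [show x - 1 = x * (1 + -x⁻¹) by field_simp; ring, Real.mul_rpow hx₀.le (by linarith),
    Real.rpow_sub_one hx₀.ne']
  calc x ^ t * (1 + -x⁻¹) ^ t + t * (x ^ t / x)
      ≤ x ^ t * (1 + t * -x⁻¹) + t * (x ^ t / x) := by gcongr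
    _ = x ^ t := by field_simp; ring

lemma sum_range_add_one_rpow_neg_le {s : ℝ} (hs₀ : 0 ≤ s) (hs₁ : s < 1) (K : ℕ) :
    ∑ j ∈ range K, ((j : ℝ) + 1) ^ (-s) ≤ (K : ℝ) ^ (1 - s) / (1 - s) := by
  induction K with
  | zero => simp [Real.zero_rpow (by linarith : (1 : ℝ) - s ≠ 0)]
  | succ K ih =>
    have hs : 0 < 1 - s := by linarith
    have step := rpow_sub_one_add_mul_rpow_le (x := (K : ℝ) + 1) (by simp) hs.le (by linarith)
    rw [add_sub_cancel_right, sub_sub_cancel_left] at step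
    rw [sum_range_succ, Nat.cast_succ]
    calc ∑ j ∈ range K, ((j : ℝ) + 1) ^ (-s) + ((K : ℝ) + 1) ^ (-s)
        ≤ (K : ℝ) ^ (1 - s) / (1 - s) + ((K : ℝ) + 1) ^ (-s) := by gcongr
      _ = ((K : ℝ) ^ (1 - s) + (1 - s) * ((K : ℝ) + 1) ^ (-s)) / (1 - s) := by field_simp
      _ ≤ ((K : ℝ) + 1) ^ (1 - s) / (1 - s) := by gcongr

lemma sum_Icc_jbr_rpow_neg_le {s : ℝ} (hs₀ : 0 ≤ s) (hs₁ : s < 1) (K : ℕ) :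
    ∑ k ∈ Icc (-(K : ℤ)) K, jbr k ^ (-s) ≤ 2 * (1 + (K : ℝ) ^ (1 - s) / (1 - s)) := by
  have hcover : Icc (-(K : ℤ)) K ⊆
      (range (K + 1)).image (fun j : ℕ => (j : ℤ)) ∪
        (range (K + 1)).image (fun j : ℕ => -(j : ℤ)) := by
    intro k hk
    rw [mem_Icc] at hk
    simp only [mem_union, mem_image, mem_range]
    rcases le_total 0 k with h | h
    · exact Or.inl ⟨k.toNat, by omega, by omega⟩
    · exact Or.inr ⟨(-k).toNat, by omega, by omega⟩
  have hhalf : ∑ j ∈ range (K + 1), jbr j ^ (-s) ≤ 1 + (K : ℝ) ^ (1 - s) / (1 - s) := by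
    rw [sum_range_succ', Nat.cast_zero, jbr_zero, Real.one_rpow, add_comm]
    gcongr
    refine (sum_le_sum fun j _ => ?_).trans (sum_range_add_one_rpow_neg_le hs₀ hs₁ K)
    refine Real.rpow_le_rpow_of_nonpos (by positivity) ?_ (neg_nonpos.mpr hs₀)
    simpa [abs_of_nonneg (by positivity : (0 : ℝ) ≤ j + 1)] using abs_le_jbr ((j + 1 : ℕ) : ℤ)
  calc ∑ k ∈ Icc (-(K : ℤ)) K, jbr k ^ (-s)
      ≤ ∑ j ∈ range (K + 1), jbr j ^ (-s) + ∑ j ∈ range (K + 1), jbr (-(j : ℤ)) ^ (-s) :=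
        sum_le_sum_comp_add_sum_comp (fun k => jbr_rpow_nonneg k _) hcover
    _ ≤ 2 * (1 + (K : ℝ) ^ (1 - s) / (1 - s)) := by
        simp only [jbr_neg]; linarith

lemma rpow_one_sub_le_sum_Icc_two_div_jbr_rpow {s : ℝ} (hs : 0 ≤ s) (N : ℕ) :
    ((N : ℝ) + 1) ^ (1 - s) ≤ ∑ k ∈ Icc (-(N : ℤ)) N, 2 / jbr k ^ s := by
  have hN : (0 : ℝ) < N + 1 := by positivity
  have hterm : ∀ k ∈ Icc (-(N : ℤ)) N, 2 / ((N : ℝ) + 1) ^ s ≤ 2 / jbr k ^ s := by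
    intro k hk
    have habs : |(k : ℝ)| ≤ N := by
      rw [mem_Icc] at hk; exact abs_le.mpr ⟨by exact_mod_cast hk.1, by exact_mod_cast hk.2⟩
    have := jbr_pos k
    gcongr
    linarith [jbr_le_one_add_abs k]
  have hcard : #(Icc (-(N : ℤ)) N) = 2 * N + 1 := by rw [Int.card_Icc]; omega
  calc ((N : ℝ) + 1) ^ (1 - s) = ((N : ℝ) + 1) / ((N : ℝ) + 1) ^ s := by
        rw [Real.rpow_sub hN, Real.rpow_one]
    _ ≤ (2 * N + 1 : ℕ) * (2 / ((N : ℝ) + 1) ^ s) := by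
        rw [mul_div_assoc']; gcongr; push_cast; linarith
    _ ≤ ∑ k ∈ Icc (-(N : ℤ)) N, 2 / jbr k ^ s := by
        simpa [hcard] using card_nsmul_le_sum _ _ _ hterm

lemma renC_pow_four (α : ℝ) (N : ℕ) :
    renC α N ^ 4 = (∑ k ∈ Icc (-(N : ℤ)) N, 2 / jbr k ^ (4 * α))⁻¹ := by
  have hD : 0 ≤ ∑ k ∈ Icc (-(N : ℤ)) N, 2 / jbr k ^ (4 * α) :=
    sum_nonneg fun k _ => div_nonneg zero_le_two (jbr_rpow_nonneg k _)
  rw [renC, ← Real.rpow_natCast, ← Real.rpow_mul hD]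
  norm_num [Real.rpow_neg_one]

lemma mem_Icc_natFloor_of_abs_le {k : ℤ} {T : ℝ} (h : |(k : ℝ)| ≤ T) :
    k ∈ Icc (-(⌊T⌋₊ : ℤ)) ⌊T⌋₊ := by
  have : k.natAbs ≤ ⌊T⌋₊ := Nat.le_floor (by rwa [Nat.cast_natAbs, Int.cast_abs])
  rw [mem_Icc]; omega

lemma sum_filter_min_abs_le {s : Finset (ℤ × ℤ)} {n : ℤ} (hs : ∀ p ∈ s, p.1 + p.2 = n)
    {f : ℤ × ℤ → ℝ} (hf : ∀ p, 0 ≤ f p) {g : ℤ → ℝ}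
    (hg₁ : ∀ a b, a + b = n → f (a, b) ≤ g a) (hg₂ : ∀ a b, a + b = n → f (a, b) ≤ g b)
    (T : ℝ) :
    ∑ p ∈ s.filter (fun p => min |(p.1 : ℝ)| |(p.2 : ℝ)| ≤ T), f p
      ≤ 2 * ∑ k ∈ Icc (-(⌊T⌋₊ : ℤ)) ⌊T⌋₊, g k := by
  set I := Icc (-(⌊T⌋₊ : ℤ)) ⌊T⌋₊
  have hcover : s.filter (fun p => min |(p.1 : ℝ)| |(p.2 : ℝ)| ≤ T) ⊆
      I.image (fun k => (k, n - k)) ∪ I.image (fun k => (n - k, k)) := by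
    intro p hp
    rw [mem_filter] at hp
    have hsum := hs p hp.1
    simp only [mem_union, mem_image]
    rcases min_le_iff.mp hp.2 with h | h
    · exact Or.inl ⟨p.1, mem_Icc_natFloor_of_abs_le h, Prod.ext rfl (by omega)⟩
    · exact Or.inr ⟨p.2, mem_Icc_natFloor_of_abs_le h, Prod.ext (by omega) rfl⟩
  calc _ ≤ ∑ k ∈ I, f (k, n - k) + ∑ k ∈ I, f (n - k, k) :=
        sum_le_sum_comp_add_sum_comp hf hcover
    _ ≤ ∑ k ∈ I, g k + ∑ k ∈ I, g k := by
        gcongr with k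
        · exact hg₁ _ _ (by ring)
        · exact hg₂ _ _ (by ring)
    _ = 2 * ∑ k ∈ I, g k := by ring

lemma sum_low_frequency_le {α : ℝ} (hα₁ : 0 < α) (hα₂ : α < 1 / 4) (N : ℕ) (n : ℤ) (T : ℝ) :
    ∑ p ∈ (pairSet N n).filter (fun p => min |(p.1 : ℝ)| |(p.2 : ℝ)| ≤ T),
        2 * jbr p.1 ^ (-(2 * α)) * jbr p.2 ^ (-(2 * α))
      ≤ 4 * (2 * (√2 * jbr n) ^ (2 * α)) *
          (1 + (⌊T⌋₊ : ℝ) ^ (1 - 4 * α) / (1 - 4 * α)) := by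
  set C := 2 * (√2 * jbr n) ^ (2 * α)
  have hC : 0 ≤ C :=
    mul_nonneg zero_le_two (Real.rpow_nonneg (mul_nonneg (by positivity) (jbr_pos n).le) _)
  have hpairs : ∀ p ∈ pairSet N n, p.1 + p.2 = n := fun p hp => (mem_filter.mp hp).2
  have hweight := two_mul_jbr_rpow_mul_jbr_rpow_le hα₁.le
  calc _ ≤ 2 * ∑ k ∈ Icc (-(⌊T⌋₊ : ℤ)) ⌊T⌋₊, C * jbr k ^ (-(4 * α)) := by
        refine sum_filter_min_abs_le hpairs
          (fun p => two_mul_jbr_rpow_mul_jbr_rpow_nonneg _ p.1 p.2)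
          (fun a b hab => ?_) (fun a b hab => ?_) T
        · simpa [C, hab] using hweight a b
        · simpa [C, add_comm b a ▸ hab, mul_right_comm] using hweight b a
    _ ≤ 2 * (C * (2 * (1 + (⌊T⌋₊ : ℝ) ^ (1 - 4 * α) / (1 - 4 * α)))) := by
        rw [← mul_sum]
        gcongr
        exact sum_Icc_jbr_rpow_neg_le (by positivity) (by linarith) _
    _ = 4 * C * (1 + (⌊T⌋₊ : ℝ) ^ (1 - 4 * α) / (1 - 4 * α)) := by ring

lemma renC_pow_four_mul_sum_low_frequency_le {α : ℝ} (hα₁ : 0 < α) (hα₂ : α < 1 / 4)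
    (ε : ℝ) (n : ℤ) {N : ℕ} (hN : 1 ≤ N) :
    renC α N ^ 4 *
        ∑ p ∈ (pairSet N n).filter
            (fun p => min |(p.1 : ℝ)| |(p.2 : ℝ)| ≤ (N : ℝ) ^ (1 - ε)),
          2 * jbr p.1 ^ (-(2 * α)) * jbr p.2 ^ (-(2 * α))
      ≤ 4 * (2 * (√2 * jbr n) ^ (2 * α)) *
          ((N : ℝ) ^ (-(1 - 4 * α)) + (N : ℝ) ^ (-(ε * (1 - 4 * α))) / (1 - 4 * α)) := by
  set C := 2 * (√2 * jbr n) ^ (2 * α)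
  set T := (N : ℝ) ^ (1 - ε)
  have hs : 0 < 1 - 4 * α := by linarith
  have hN₀ : (0 : ℝ) < N := by exact_mod_cast hN
  have hC : 0 ≤ C :=
    mul_nonneg zero_le_two (Real.rpow_nonneg (mul_nonneg (by positivity) (jbr_pos n).le) _)
  have hfloor : (⌊T⌋₊ : ℝ) ^ (1 - 4 * α) ≤ (N : ℝ) ^ ((1 - ε) * (1 - 4 * α)) := by
    rw [Real.rpow_mul hN₀.le]
    gcongr
    exact Nat.floor_le (by positivity)
  have hnum := (sum_low_frequency_le hα₁ hα₂ N n T).trans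
    (by gcongr : 4 * C * (1 + (⌊T⌋₊ : ℝ) ^ (1 - 4 * α) / (1 - 4 * α))
      ≤ 4 * C * (1 + (N : ℝ) ^ ((1 - ε) * (1 - 4 * α)) / (1 - 4 * α)))
  have hden : (N : ℝ) ^ (1 - 4 * α) ≤ ∑ k ∈ Icc (-(N : ℤ)) N, 2 / jbr k ^ (4 * α) :=
    (Real.rpow_le_rpow hN₀.le (by linarith) hs.le).trans
      (rpow_one_sub_le_sum_Icc_two_div_jbr_rpow (by positivity) N)
  have hpow : (N : ℝ) ^ (-(ε * (1 - 4 * α)))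
      = (N : ℝ) ^ ((1 - ε) * (1 - 4 * α)) * (N : ℝ) ^ (-(1 - 4 * α)) := by
    rw [← Real.rpow_add hN₀]; ring_nf
  rw [renC_pow_four, inv_mul_eq_div, hpow, Real.rpow_neg hN₀.le]
  calc _ ≤ 4 * C * (1 + (N : ℝ) ^ ((1 - ε) * (1 - 4 * α)) / (1 - 4 * α))
        / (N : ℝ) ^ (1 - 4 * α) :=
        div_le_div₀ (by positivity) hnum (by positivity) hden
    _ = _ := by field_simp

/-- For `0 < α < 1/4` and every `ε > 0` and fixed `n`, the contribution to
`C_{α,N}⁴ ∑_{n₁+n₂=n, |n₁|,|n₂|≤N} 2⟨n₁⟩^{-2α}⟨n₂⟩^{-2α}` from the range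
`min(|n₁|,|n₂|) ≤ N^{1-ε}` vanishes as `N → ∞`. -/
theorem renC_low_frequency_contribution_vanishes (α ε : ℝ)
    (hα₁ : 0 < α) (hα₂ : α < 1 / 4) (hε : 0 < ε) (n : ℤ) :
    Tendsto (fun N : ℕ =>
      renC α N ^ 4 *
        ∑ p ∈ (pairSet N n).filter
            (fun p => min |(p.1 : ℝ)| |(p.2 : ℝ)| ≤ (N : ℝ) ^ (1 - ε)),
          2 * jbr p.1 ^ (-(2 * α)) * jbr p.2 ^ (-(2 * α)))
      atTop (nhds 0) := by
  have hs : 0 < 1 - 4 * α := by linarith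
  have hnonneg : ∀ N : ℕ, 0 ≤ renC α N ^ 4 *
      ∑ p ∈ (pairSet N n).filter (fun p => min |(p.1 : ℝ)| |(p.2 : ℝ)| ≤ (N : ℝ) ^ (1 - ε)),
        2 * jbr p.1 ^ (-(2 * α)) * jbr p.2 ^ (-(2 * α)) := fun N =>
    mul_nonneg ((by decide : Even 4).pow_nonneg _)
      (sum_nonneg fun p _ => two_mul_jbr_rpow_mul_jbr_rpow_nonneg _ p.1 p.2)
  have hdecay {a : ℝ} (ha : 0 < a) : Tendsto (fun N : ℕ => (N : ℝ) ^ (-a)) atTop (nhds 0) :=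
    (tendsto_rpow_neg_atTop ha).comp tendsto_natCast_atTop_atTop
  refine squeeze_zero' (Eventually.of_forall hnonneg)
    ((eventually_ge_atTop 1).mono fun N hN =>
      renC_pow_four_mul_sum_low_frequency_le hα₁ hα₂ ε n hN) ?_
  simpa using ((hdecay hs).add ((hdecay (mul_pos hε hs)).div_const (1 - 4 * α))).const_mul
    (4 * (2 * (√2 * jbr n) ^ (2 * α)))
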